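/- Define G(x, t) = √2 ν ∫₀^{2t/x²} (√(2t − x² s)/(π s^{3/2})) e^{−1/(2s)} ds for x ≠ 0, t > 0, ν > 0. Then the partial derivative ∂G/∂x satisfies |∂G/∂x(x, t)| ≤ 2ν for all x ≠ 0 and t > 0. -/

import Mathlib

/-!
Substituting `u = x² s` (for `x > 0`, with `T = 2t`) gives
`G = √2 ν ∫₀ᵀ √(T - u) / (π u^{3/2}) · x e^{-x²/2u} du`, an integral over a fixed interval whose
integrand is smooth in `x` with a derivative bounded uniformly in `u`, so `∂G/∂x` is the integral
of the `x`-derivative. That derivative differs from `-e^{-x²/2u} / (π √u √(T - u))` by the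
`u`-derivative of `-(2/π) √(T - u) / √u · e^{-x²/2u}`, which vanishes at both ends, hence
`∂G/∂x = -√2 ν ∫₀ᵀ e^{-x²/2u} / (π √u √(T - u)) du`. Bounding the exponential by `1` leaves the
arcsine integral `∫₀ᵀ du / √(u (T - u)) = π`, so `|∂G/∂x| ≤ √2 ν ≤ 2ν`. The case `x < 0` follows
because `G` is even in `x`.
-/

open MeasureTheory Real

/-- The covariance contribution function `G(x,t)` of the Howitt-Warren 2-point motion,
with stickiness parameter `ν`. -/
noncomputable def Gfun (ν x t : ℝ) : ℝ :=
  Real.sqrt 2 * ν * ∫ s in Set.Ioc (0:ℝ) (2 * t / x ^ 2),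
    Real.sqrt (2 * t - x ^ 2 * s) / (Real.pi * s ^ ((3:ℝ)/2)) * Real.exp (-1 / (2 * s))

open Set Filter Topology

lemma exp_neg_div_le_factorial_mul_div_pow {c u : ℝ} (hc : 0 < c) (hu : 0 < u) (n : ℕ) :
    exp (-(c / u)) ≤ n.factorial * (u / c) ^ n := by
  have h := pow_div_factorial_le_exp _ (div_pos hc hu).le n
  rw [exp_neg, inv_le_iff_one_le_mul₀' (exp_pos _)]
  calc (1 : ℝ) = n.factorial * (u / c) ^ n * ((c / u) ^ n / n.factorial) := by
        rw [div_pow, div_pow]; field_simp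
    _ ≤ n.factorial * (u / c) ^ n * exp (c / u) := by gcongr
    _ = exp (c / u) * (n.factorial * (u / c) ^ n) := mul_comm _ _

lemma intervalIntegrable_of_abs_le {f : ℝ → ℝ} {a b M : ℝ} (hab : a ≤ b) (hf : Measurable f)
    (h : ∀ u ∈ Ioc a b, |f u| ≤ M) : IntervalIntegrable f volume a b :=
  intervalIntegrable_const.mono_fun' hf.aestronglyMeasurable <|
    (ae_restrict_iff' measurableSet_uIoc).2 <| ae_of_all _ fun u hu => h u (uIoc_of_le hab ▸ hu)

section Arcsine

variable {a b : ℝ}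

lemma hasDerivAt_arcsin_affine {u : ℝ} (hau : a < u) (hub : u < b) :
    HasDerivAt (fun v => arcsin ((2 * v - a - b) / (b - a))) (√(u - a) * √(b - u))⁻¹ u := by
  have hab : 0 < b - a := by linarith
  have hsq : 1 - ((2 * u - a - b) / (b - a)) ^ 2 = (2 * (√(u - a) * √(b - u)) / (b - a)) ^ 2 := by
    rw [div_pow, div_pow, mul_pow, mul_pow, sq_sqrt (by linarith), sq_sqrt (by linarith)]
    field_simp
    ring
  have hlin : HasDerivAt (fun v => (2 * v - a - b) / (b - a)) (2 / (b - a)) u := by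
    simpa using (((hasDerivAt_id u).const_mul 2).sub_const a |>.sub_const b).div_const (b - a)
  refine ((hasDerivAt_arcsin ?_ ?_).comp u hlin).congr_deriv ?_
  · rw [ne_eq, div_eq_iff hab.ne']; linarith
  · rw [ne_eq, div_eq_iff hab.ne']; linarith
  · rw [hsq, sqrt_sq (by positivity)]
    field_simp

lemma intervalIntegrable_inv_sqrt_sub_mul_sqrt_sub (hab : a < b) :
    IntervalIntegrable (fun u => (√(u - a) * √(b - u))⁻¹) volume a b :=
  (intervalIntegrable_iff_integrableOn_Ioc_of_le hab.le).2 <|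
    intervalIntegral.integrableOn_deriv_of_nonneg (by fun_prop)
      (fun _ hu => hasDerivAt_arcsin_affine hu.1 hu.2) fun _ _ => by positivity

lemma integral_inv_sqrt_sub_mul_sqrt_sub (hab : a < b) :
    ∫ u in a..b, (√(u - a) * √(b - u))⁻¹ = π := by
  rw [intervalIntegral.integral_eq_sub_of_hasDerivAt_of_le hab.le (by fun_prop)
    (fun _ hu => hasDerivAt_arcsin_affine hu.1 hu.2)
    (intervalIntegrable_inv_sqrt_sub_mul_sqrt_sub hab)]
  have h₁ : (2 * b - a - b) / (b - a) = 1 := by rw [div_eq_one_iff_eq (by linarith)]; ring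
  have h₂ : (2 * a - a - b) / (b - a) = -1 := by rw [div_eq_iff (by linarith)]; ring
  rw [h₁, h₂, arcsin_one, arcsin_neg_one]
  ring

end Arcsine

namespace Gfun

noncomputable def weight (T u : ℝ) : ℝ := √(T - u) / (π * (u * √u))

noncomputable def integrand (T x u : ℝ) : ℝ := weight T u * (x * exp (-(x ^ 2 / (2 * u))))

noncomputable def integrandDeriv (T x u : ℝ) : ℝ :=
  weight T u * ((1 - x ^ 2 / u) * exp (-(x ^ 2 / (2 * u))))

noncomputable def dampedArcsine (T x u : ℝ) : ℝ :=
  exp (-(x ^ 2 / (2 * u))) / (π * (√u * √(T - u)))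

-- Division by `√0 = 0` gives `primitive T x 0 = 0`, which is also its limit as `u → 0⁺`.
noncomputable def primitive (T x u : ℝ) : ℝ :=
  -(2 / π) * (√(T - u) / √u) * exp (-(x ^ 2 / (2 * u)))

variable {T b c x u : ℝ}

lemma weight_nonneg (T : ℝ) (hu : 0 ≤ u) : 0 ≤ weight T u := by
  unfold weight; positivity

lemma weight_mul_exp_le (hc : 0 < c) (hb : 0 ≤ b) (hu : 0 < u) (huT : u ≤ T) :
    weight T u * ((1 + b / u) * exp (-(c / u))) ≤ 6 * T * (T + b) / (π * c ^ 3) := by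
  obtain ⟨s, hs, rfl⟩ : ∃ s, 0 < s ∧ u = s ^ 2 := ⟨√u, sqrt_pos.2 hu, (sq_sqrt hu.le).symm⟩
  have hsT : s ≤ √T := by rw [← sqrt_sq hs.le]; exact sqrt_le_sqrt huT
  calc weight T (s ^ 2) * ((1 + b / s ^ 2) * exp (-(c / s ^ 2)))
      ≤ √T / (π * (s ^ 2 * s)) * ((1 + b / s ^ 2) * ((3).factorial * (s ^ 2 / c) ^ 3)) := by
        unfold weight
        rw [sqrt_sq hs.le]
        gcongr
        · linarith
        · exact exp_neg_div_le_factorial_mul_div_pow hc hu 3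
    _ = 6 * (√T * s) * (s ^ 2 + b) / (π * c ^ 3) := by
        simp only [Nat.factorial]
        field_simp
        ring
    _ ≤ 6 * (√T * √T) * (T + b) / (π * c ^ 3) := by gcongr
    _ = 6 * T * (T + b) / (π * c ^ 3) := by rw [mul_self_sqrt (hu.le.trans huT)]

lemma weight_mul_exp_le_of_ne_zero (hx : x ≠ 0) (hu : 0 < u) (huT : u ≤ T) :
    weight T u * exp (-(x ^ 2 / (2 * u))) ≤ 6 * T * T / (π * (x ^ 2 / 2) ^ 3) := by
  have h := weight_mul_exp_le (b := 0) (c := x ^ 2 / 2) (by positivity) le_rfl hu huT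
  rwa [zero_div, add_zero, add_zero, one_mul, div_div] at h

lemma abs_integrandDeriv_le (hc : 0 < c) (hcx : c ≤ x ^ 2 / 2) (hxb : x ^ 2 ≤ b) (hu : 0 < u)
    (huT : u ≤ T) : |integrandDeriv T x u| ≤ 6 * T * (T + b) / (π * c ^ 3) := by
  have hb : 0 ≤ b := (sq_nonneg x).trans hxb
  refine le_trans ?_ (weight_mul_exp_le hc hb hu huT)
  unfold integrandDeriv
  rw [abs_mul, abs_of_nonneg (weight_nonneg T hu.le), abs_mul, abs_of_pos (exp_pos _)]
  refine mul_le_mul_of_nonneg_left (mul_le_mul ?_ ?_ (exp_pos _).le (by positivity))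
    (weight_nonneg T hu.le)
  · rw [abs_le]
    constructor <;> linarith [div_nonneg (sq_nonneg x) hu.le, div_le_div_of_nonneg_right hxb hu.le]
  · rw [exp_le_exp, neg_le_neg_iff, ← div_div]
    exact div_le_div_of_nonneg_right hcx hu.le

lemma measurable_integrand : Measurable (integrand T x) := by
  unfold integrand weight; fun_prop

lemma measurable_integrandDeriv : Measurable (integrandDeriv T x) := by
  unfold integrandDeriv weight; fun_prop

lemma measurable_dampedArcsine : Measurable (dampedArcsine T x) := by
  unfold dampedArcsine; fun_prop

lemma intervalIntegrable_integrand (hT : 0 ≤ T) (hx : x ≠ 0) :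
    IntervalIntegrable (integrand T x) volume 0 T := by
  refine intervalIntegrable_of_abs_le (M := |x| * (6 * T * T / (π * (x ^ 2 / 2) ^ 3))) hT
    measurable_integrand fun u hu => ?_
  unfold integrand
  rw [abs_mul, abs_mul, abs_of_nonneg (weight_nonneg T hu.1.le), abs_of_pos (exp_pos _),
    mul_left_comm]
  exact mul_le_mul_of_nonneg_left (weight_mul_exp_le_of_ne_zero hx hu.1 hu.2) (abs_nonneg x)

lemma intervalIntegrable_integrandDeriv (hT : 0 ≤ T) (hx : x ≠ 0) :
    IntervalIntegrable (integrandDeriv T x) volume 0 T :=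
  intervalIntegrable_of_abs_le hT measurable_integrandDeriv fun _ hu =>
    abs_integrandDeriv_le (by positivity) le_rfl le_rfl hu.1 hu.2

lemma hasDerivAt_integrand (hu : 0 < u) (y : ℝ) :
    HasDerivAt (fun y => integrand T y u) (integrandDeriv T y u) y := by
  have h := ((hasDerivAt_id y).mul (((hasDerivAt_pow 2 y).div_const (2 * u)).neg.exp)).const_mul
    (weight T u)
  simp only [Pi.mul_apply, Pi.neg_apply, id] at h
  refine h.congr_deriv ?_
  unfold integrandDeriv
  field_simp
  ring

lemma hasDerivAt_integral_integrand (hT : 0 ≤ T) (hx : x ≠ 0) :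
    HasDerivAt (fun y => ∫ u in 0..T, integrand T y u) (∫ u in 0..T, integrandDeriv T x u) x := by
  have hx' : 0 < |x| := abs_pos.2 hx
  refine (intervalIntegral.hasDerivAt_integral_of_dominated_loc_of_deriv_le
    (F := fun y => integrand T y) (F' := fun y => integrandDeriv T y)
    (bound := fun _ => 6 * T * (T + 9 * x ^ 2 / 4) / (π * (x ^ 2 / 8) ^ 3))
    (Metric.ball_mem_nhds x (half_pos hx'))
    (Eventually.of_forall fun _ => measurable_integrand.aestronglyMeasurable)
    (intervalIntegrable_integrand hT hx) measurable_integrandDeriv.aestronglyMeasurable ?_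
    intervalIntegrable_const ?_).2
  · refine ae_of_all _ fun u hu y hy => ?_
    rw [uIoc_of_le hT] at hu
    rw [Metric.mem_ball, dist_eq_norm, Real.norm_eq_abs] at hy
    have hy₁ : |x| / 2 < |y| := by linarith [abs_sub_abs_le_abs_sub x y, abs_sub_comm x y]
    have hy₂ : |y| < 3 * |x| / 2 := by linarith [abs_sub_abs_le_abs_sub y x]
    refine abs_integrandDeriv_le (by positivity) ?_ ?_ hu.1 hu.2
    · rw [← sq_abs y, ← sq_abs x]; nlinarith
    · rw [← sq_abs y, ← sq_abs x]; nlinarith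
  · exact ae_of_all _ fun u hu y _ => hasDerivAt_integrand (uIoc_of_le hT ▸ hu).1 y

lemma dampedArcsine_nonneg (T x u : ℝ) : 0 ≤ dampedArcsine T x u := by
  unfold dampedArcsine; positivity

lemma dampedArcsine_le (T x : ℝ) (hu : 0 ≤ u) : dampedArcsine T x u ≤ (√u * √(T - u))⁻¹ / π := by
  rw [dampedArcsine, div_mul_eq_div_div_swap, inv_eq_one_div]
  gcongr
  rw [exp_le_one_iff, neg_nonpos]
  positivity

lemma intervalIntegrable_dampedArcsine (hT : 0 < T) :
    IntervalIntegrable (dampedArcsine T x) volume 0 T := by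
  have h := (intervalIntegrable_inv_sqrt_sub_mul_sqrt_sub hT).div_const π
  simp only [sub_zero] at h
  refine h.mono_fun' measurable_dampedArcsine.aestronglyMeasurable <|
    (ae_restrict_iff' measurableSet_uIoc).2 <| ae_of_all _ fun u hu => ?_
  rw [uIoc_of_le hT.le] at hu
  dsimp only
  rw [Real.norm_of_nonneg (dampedArcsine_nonneg T x u)]
  exact dampedArcsine_le T x hu.1.le

lemma integral_dampedArcsine_le_one (hT : 0 < T) : ∫ u in 0..T, dampedArcsine T x u ≤ 1 := by
  have hint := intervalIntegrable_inv_sqrt_sub_mul_sqrt_sub hT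
  have hval := integral_inv_sqrt_sub_mul_sqrt_sub hT
  simp only [sub_zero] at hint hval
  calc ∫ u in 0..T, dampedArcsine T x u ≤ ∫ u in 0..T, (√u * √(T - u))⁻¹ / π :=
        intervalIntegral.integral_mono_on hT.le (intervalIntegrable_dampedArcsine hT)
          (hint.div_const π) fun u hu => dampedArcsine_le T x hu.1
    _ = 1 := by rw [intervalIntegral.integral_div, hval, div_self pi_ne_zero]

lemma hasDerivAt_primitive (hu : 0 < u) (huT : u < T) :
    HasDerivAt (primitive T x) (integrandDeriv T x u + dampedArcsine T x u) u := by
  have hTu : 0 < T - u := by linarith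
  have hsu : 0 < √u := sqrt_pos.2 hu
  have h := ((((hasDerivAt_id u).const_sub T).sqrt hTu.ne').div (hasDerivAt_sqrt hu.ne') hsu.ne'
    |>.mul ((hasDerivAt_const u (x ^ 2)).div ((hasDerivAt_id u).const_mul 2) (by simp; positivity)
      |>.neg.exp)).const_mul (-(2 / π))
  simp only [Pi.mul_apply, Pi.div_apply, Pi.neg_apply, id] at h
  refine (h.congr_of_eventuallyEq (Eventually.of_forall fun v => ?_)).congr_deriv ?_
  · simp only [primitive]; ring
  · unfold integrandDeriv dampedArcsine weight
    field_simp
    rw [sq_sqrt hu.le, sq_sqrt hTu.le]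
    ring

lemma abs_primitive_le (hx : x ≠ 0) (hu : 0 < u) (huT : u ≤ T) :
    |primitive T x u| ≤ 2 * u * (6 * T * T / (π * (x ^ 2 / 2) ^ 3)) := by
  have h : primitive T x u = -(2 * u) * (weight T u * exp (-(x ^ 2 / (2 * u)))) := by
    unfold primitive weight
    field_simp
  rw [h, abs_mul, abs_neg, abs_of_pos (by positivity),
    abs_of_nonneg (mul_nonneg (weight_nonneg T hu.le) (exp_pos _).le)]
  gcongr
  exact weight_mul_exp_le_of_ne_zero hx hu huT

lemma continuousOn_primitive (hx : x ≠ 0) : ContinuousOn (primitive T x) (Icc 0 T) := by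
  intro u hu
  rcases hu.1.eq_or_lt with rfl | hu₀
  · have hK : Tendsto (fun v => 2 * v * (6 * T * T / (π * (x ^ 2 / 2) ^ 3))) (𝓝[Icc 0 T] 0)
        (𝓝 0) :=
      ((continuous_const.mul continuous_id).mul continuous_const).tendsto' 0 0 (by simp)
        |>.mono_left nhdsWithin_le_nhds
    rw [ContinuousWithinAt, show primitive T x 0 = 0 by simp [primitive]]
    refine squeeze_zero_norm' ?_ hK
    filter_upwards [self_mem_nhdsWithin] with v ⟨hv₀, hvT⟩
    rcases hv₀.eq_or_lt with rfl | hv₀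
    · simp [primitive]
    · exact abs_primitive_le hx hv₀ hvT
  · unfold primitive
    fun_prop (disch := positivity)

lemma integral_integrandDeriv (hT : 0 < T) (hx : x ≠ 0) :
    ∫ u in 0..T, integrandDeriv T x u = -∫ u in 0..T, dampedArcsine T x u := by
  have hI := intervalIntegrable_integrandDeriv hT.le hx
  have hJ := intervalIntegrable_dampedArcsine (x := x) hT
  have h := intervalIntegral.integral_eq_sub_of_hasDerivAt_of_le hT.le (continuousOn_primitive hx)
    (fun u hu => hasDerivAt_primitive hu.1 hu.2) (hI.add hJ)
  rw [intervalIntegral.integral_add hI hJ] at h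
  simp only [primitive, sub_self, sqrt_zero, zero_div, div_zero, mul_zero, zero_mul, sub_zero] at h
  linarith

end Gfun

open Gfun

lemma Gfun_eq_integral_integrand (ν : ℝ) {x t : ℝ} (hx : 0 < x) (ht : 0 ≤ t) :
    Gfun ν x t = √2 * ν * ∫ u in 0..2 * t, integrand (2 * t) x u := by
  have hx2 : x ^ 2 ≠ 0 := by positivity
  have hsub := intervalIntegral.inv_smul_integral_comp_div (a := 0) (b := 2 * t)
    (f := fun s => √(2 * t - x ^ 2 * s) / (π * s ^ ((3:ℝ) / 2)) * exp (-1 / (2 * s))) (x ^ 2)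
  rw [zero_div] at hsub
  rw [Gfun, ← intervalIntegral.integral_of_le (by positivity), ← hsub,
    ← intervalIntegral.integral_smul]
  congr 1
  refine intervalIntegral.integral_congr_ae (ae_of_all _ fun u hu => ?_)
  rw [uIoc_of_le (by positivity)] at hu
  have hu₀ : 0 < u := hu.1
  have hpow : (u / x ^ 2) ^ ((3:ℝ) / 2) = u * √u / x ^ 3 := by
    rw [show (3:ℝ) / 2 = 1 + 1 / 2 by norm_num, rpow_add (by positivity), rpow_one,
      ← sqrt_eq_rpow, sqrt_div' _ (sq_nonneg x), sqrt_sq hx.le]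
    field_simp
  simp only [smul_eq_mul, integrand, weight, hpow]
  rw [mul_div_cancel₀ u hx2]
  field_simp

lemma hasDerivAt_Gfun (ν : ℝ) {x t : ℝ} (hx : 0 < x) (ht : 0 < t) :
    HasDerivAt (fun y => Gfun ν y t)
      (-(√2 * ν * ∫ u in 0..2 * t, dampedArcsine (2 * t) x u)) x := by
  have hT : 0 < 2 * t := by positivity
  have h := (hasDerivAt_integral_integrand hT.le hx.ne').const_mul (√2 * ν)
  rw [integral_integrandDeriv hT hx.ne', mul_neg] at h
  exact h.congr_of_eventuallyEq <|
    (eventually_gt_nhds hx).mono fun y hy => Gfun_eq_integral_integrand ν hy ht.le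

lemma Gfun_neg (ν x t : ℝ) : Gfun ν (-x) t = Gfun ν x t := by
  rw [Gfun, Gfun, neg_sq]

lemma deriv_Gfun_eq_neg_deriv_neg (ν x t : ℝ) :
    deriv (fun y => Gfun ν y t) x = -deriv (fun y => Gfun ν y t) (-x) := by
  simpa only [Gfun_neg] using deriv_comp_neg (f := fun y => Gfun ν y t) (x := x)

/-- The spatial partial derivative of `G` is uniformly bounded: `|∂G/∂x (x,t)| ≤ 2ν`
for all `x ≠ 0` and `t > 0`. -/
theorem abs_deriv_Gfun_le (ν x t : ℝ) (hν : 0 < ν) (hx : x ≠ 0) (ht : 0 < t) :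
    |deriv (fun y : ℝ => Gfun ν y t) x| ≤ 2 * ν := by
  wlog hx₀ : 0 < x generalizing x
  · rw [deriv_Gfun_eq_neg_deriv_neg, abs_neg]
    exact this (-x) (neg_ne_zero.2 hx) (neg_pos.2 (lt_of_le_of_ne (not_lt.1 hx₀) hx))
  have hT : 0 < 2 * t := by positivity
  have hI₀ : 0 ≤ ∫ u in 0..2 * t, dampedArcsine (2 * t) x u :=
    intervalIntegral.integral_nonneg hT.le fun u _ => dampedArcsine_nonneg _ _ _
  rw [(hasDerivAt_Gfun ν hx₀ ht).deriv, abs_neg, abs_of_nonneg (by positivity)]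
  calc √2 * ν * ∫ u in 0..2 * t, dampedArcsine (2 * t) x u ≤ √2 * ν * 1 := by
        gcongr; exact integral_dampedArcsine_le_one hT
    _ ≤ 2 * ν := by
        have : √2 ≤ 2 := sqrt_le_iff.2 ⟨by norm_num, by norm_num⟩
        nlinarith
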